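/- For every integer n ≥ 3, the sum over k from 3 to n of H_k/(k−2) equals (1/2)·(H_{n+1}^2 + H_{n+1}^{(2)}) − (3n^2−1)/((n−1)n(n+1))·H_{n+1} + (7n^2−n−2)/(4n(n+1)). -/

import Mathlib

/-- The `n`-th harmonic number `H_n = ∑_{k=1}^n 1/k`, with `H_0 = 0`. -/
def H (n : ℕ) : ℚ := ∑ k ∈ Finset.range n, 1 / ((k : ℚ) + 1)

/-- The generalized harmonic number of order 2, `H_n^{(2)} = ∑_{k=1}^n 1/k^2`, with `H_0^{(2)} = 0`. -/
def H2 (n : ℕ) : ℚ := ∑ k ∈ Finset.range n, 1 / ((k : ℚ) + 1) ^ 2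

/-!
Substituting `k = j + 2` and `H_{j+2} = H_j + 1/(j+1) + 1/(j+2)` splits the sum into
`∑_{j ≤ n-2} H_j / j = (H_{n-2}^2 + H_{n-2}^{(2)}) / 2` (the increments of `H_j^2 + H_j^{(2)}` are
`2 H_j / j`) and two telescoping sums of `1/(j (j + d))`, `d = 1, 2`. Rewriting `H_{n-2}` as
`H_{n+1} - (1/(n-1) + 1/n + 1/(n+1))` produces the stated closed form; the coefficient of `H_{n+1}`
is `1/(n-1) + 1/n + 1/(n+1) = (3n^2-1)/((n-1)n(n+1))`.
-/

open Finset

lemma H_succ (n : ℕ) : H (n + 1) = H n + 1 / ((n : ℚ) + 1) := by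
  simp [H, sum_range_succ]

lemma H2_succ (n : ℕ) : H2 (n + 1) = H2 n + 1 / ((n : ℚ) + 1) ^ 2 := by
  simp [H2, sum_range_succ]

lemma sum_range_H_succ_div (m : ℕ) :
    ∑ j ∈ range m, H (j + 1) / ((j : ℚ) + 1) = (H m ^ 2 + H2 m) / 2 := by
  induction m with
  | zero => simp [H, H2]
  | succ m ih =>
    rw [sum_range_succ, ih, H_succ, H2_succ]
    field_simp
    ring

lemma mul_sum_range_inv_mul_add (m d : ℕ) :
    (d : ℚ) * ∑ j ∈ range m, 1 / (((j : ℚ) + 1) * ((j : ℚ) + 1 + d)) = H m + H d - H (m + d) := by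
  induction m with
  | zero => simp [H]
  | succ m ih =>
    rw [sum_range_succ, mul_add, ih, H_succ, show m + 1 + d = m + d + 1 by ring, H_succ]
    push_cast
    field_simp
    ring

lemma sum_range_H_add_three_div (m : ℕ) :
    ∑ j ∈ range m, H (j + 3) / ((j : ℚ) + 1) =
      (H m ^ 2 + H2 m) / 2 + (1 - H (m + 1) + H m) + (H m + 3 / 2 - H (m + 2)) / 2 := by
  have hsplit : ∀ j : ℕ, H (j + 3) / ((j : ℚ) + 1) = H (j + 1) / ((j : ℚ) + 1)
      + 1 / (((j : ℚ) + 1) * ((j : ℚ) + 1 + 1)) + 1 / (((j : ℚ) + 1) * ((j : ℚ) + 1 + 2)) := by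
    intro j
    rw [H_succ (j + 2), H_succ (j + 1)]
    push_cast
    field_simp
    ring
  have h1 := mul_sum_range_inv_mul_add m 1
  have h2 := mul_sum_range_inv_mul_add m 2
  rw [show H 1 = 1 by norm_num [H]] at h1
  rw [show H 2 = 3 / 2 by norm_num [H, sum_range_succ]] at h2
  push_cast at h1 h2
  rw [sum_congr rfl fun j _ => hsplit j, sum_add_distrib, sum_add_distrib, sum_range_H_succ_div]
  linarith

theorem stmt_7 (n : ℕ) (hn : 3 ≤ n) :
    ∑ k ∈ Finset.Icc 3 n, H k / ((k : ℚ) - 2) =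
      (1 / 2) * (H (n + 1) ^ 2 + H2 (n + 1))
        - (3 * (n : ℚ) ^ 2 - 1) / (((n : ℚ) - 1) * (n : ℚ) * ((n : ℚ) + 1)) * H (n + 1)
        + (7 * (n : ℚ) ^ 2 - (n : ℚ) - 2) / (4 * (n : ℚ) * ((n : ℚ) + 1)) := by
  obtain ⟨m, rfl⟩ : ∃ m, n = m + 2 := ⟨n - 2, by omega⟩
  have hreindex : ∑ k ∈ Icc 3 (m + 2), H k / ((k : ℚ) - 2) =
      ∑ j ∈ range m, H (j + 3) / ((j : ℚ) + 1) := by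
    rw [← Ico_add_one_right_eq_Icc, sum_Ico_eq_sum_range, show m + 2 + 1 - 3 = m by omega]
    refine sum_congr rfl fun j _ => ?_
    rw [add_comm 3 j]
    push_cast
    ring_nf
  rw [hreindex, sum_range_H_add_three_div, show m + 2 + 1 = m + 3 by ring,
    H_succ (m + 2), H_succ (m + 1), H_succ m, H2_succ (m + 2), H2_succ (m + 1), H2_succ m]
  push_cast
  have hden : (m : ℚ) + 2 - 1 ≠ 0 := by linarith [(m.cast_nonneg : (0 : ℚ) ≤ m)]
  field_simp
  ring
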